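/- (Chebyshev's theorem, in stereographic coordinates.) Let Ω ⊆ ℂ be a nonempty bounded connected open set, and let V ⊆ ℂ be an open set containing the closure of Ω. For a function g holomorphic on V, define its scale factor σ_g : V → ℝ by σ_g(z) = |g'(z)| · (1 + |z|²)/2 (this is the infinitesimal dilatation of the map of the round unit sphere to the plane obtained by composing the inverse stereographic projection with g). Let h and g be holomorphic on V with h'(z) ≠ 0 and g'(z) ≠ 0 for all z in the closure of Ω, and suppose σ_h is constant on the frontier of Ω. Then (sup of σ_h over the closure of Ω)/(inf of σ_h over the closure of Ω) ≤ (sup of σ_g over the closure of Ω)/(inf of σ_g over the closure of Ω); that is, among all such conformal representations, the one whose scale factor is constant on the boundary minimizes the ratio of the largest to the smallest infinitesimal dilatation. -/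

import Mathlib

/-!
Since `σ_g / σ_h = ‖g' / h'‖` with `g' / h'` holomorphic near `closure Ω`, the maximum modulus
principle puts a maximum of `σ_g / σ_h` on the frontier, where `σ_h` is constant. The scale
factor itself has no local maximum where `h' ≠ 0`: for `G z = h' z * (1 + conj z₀ * z) ^ 2`,
the identity `‖1 + conj z₀ * z‖ ^ 2 + ‖z - z₀‖ ^ 2 = (1 + ‖z₀‖ ^ 2) * (1 + ‖z‖ ^ 2)` gives
`‖G z‖ = 2 (1 + ‖z₀‖ ^ 2) σ_h z - ‖h' z‖ ‖z - z₀‖ ^ 2`, so a local maximum of `σ_h` at `z₀` is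
one of `‖G‖`; then `G` is locally constant and `h'` vanishes near `z₀`. Hence `σ_h` is maximal
at the frontier point `z₁` where `σ_g / σ_h` is maximal, and comparing with a minimum point `zₘ`
of `σ_h` gives `max σ_h / min σ_h ≤ σ_g z₁ / σ_g zₘ ≤ max σ_g / min σ_g`.
-/

open Complex

/-- The infinitesimal dilatation (scale factor) at `z` of the map of the round unit
sphere to the plane obtained by composing the inverse stereographic projection with a
holomorphic map `g`, in the stereographic coordinate `z`. -/
noncomputable def scaleFactor (g : ℂ → ℂ) (z : ℂ) : ℝ :=
  ‖deriv g z‖ * (1 + ‖z‖ ^ 2) / 2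

open Filter Topology Set ComplexConjugate

lemma norm_one_add_conj_mul_sq_add_norm_sub_sq (a z : ℂ) :
    ‖1 + conj a * z‖ ^ 2 + ‖z - a‖ ^ 2 = (1 + ‖a‖ ^ 2) * (1 + ‖z‖ ^ 2) := by
  simp only [Complex.sq_norm, normSq_apply, add_re, add_im, mul_re, mul_im, sub_re, sub_im,
    one_re, one_im, conj_re, conj_im]
  ring

lemma scaleFactor_pos {g : ℂ → ℂ} {z : ℂ} (hg : deriv g z ≠ 0) : 0 < scaleFactor g z := by
  unfold scaleFactor
  have := norm_pos_iff.mpr hg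
  positivity

lemma scaleFactor_div_scaleFactor (g h : ℂ → ℂ) (z : ℂ) :
    scaleFactor g z / scaleFactor h z = ‖deriv g z / deriv h z‖ := by
  rw [norm_div, scaleFactor, scaleFactor, mul_div_assoc, mul_div_assoc _ _ (2 : ℝ),
    mul_div_mul_right _ _ (by positivity)]

lemma AnalyticAt.continuousAt_scaleFactor {g : ℂ → ℂ} {z : ℂ} (hg : AnalyticAt ℂ g z) :
    ContinuousAt (scaleFactor g) z := by
  unfold scaleFactor
  have := hg.deriv.continuousAt
  fun_prop

lemma AnalyticAt.not_isLocalMax_scaleFactor {h : ℂ → ℂ} {z₀ : ℂ} (hh : AnalyticAt ℂ h z₀)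
    (hz₀ : deriv h z₀ ≠ 0) : ¬IsLocalMax (scaleFactor h) z₀ := by
  intro hmax
  set G : ℂ → ℂ := fun z => deriv h z * (1 + conj z₀ * z) ^ 2
  have hG : AnalyticAt ℂ G z₀ := hh.deriv.mul (by fun_prop)
  have hnormG : ∀ z, ‖G z‖ =
      2 * (1 + ‖z₀‖ ^ 2) * scaleFactor h z - ‖deriv h z‖ * ‖z - z₀‖ ^ 2 := by
    intro z
    simp only [G, scaleFactor, norm_mul, norm_pow]
    linear_combination ‖deriv h z‖ * norm_one_add_conj_mul_sq_add_norm_sub_sq z₀ z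
  have hGmax : IsLocalMax (norm ∘ G) z₀ := by
    filter_upwards [hmax] with z hz
    simp only [Function.comp, hnormG, sub_self, norm_zero]
    nlinarith [mul_le_mul_of_nonneg_left hz (by positivity : (0 : ℝ) ≤ 2 * (1 + ‖z₀‖ ^ 2)),
      mul_nonneg (norm_nonneg (deriv h z)) (sq_nonneg ‖z - z₀‖)]
  have hGconst := Complex.eventually_eq_of_isLocalMax_norm
    (hG.eventually_analyticAt.mono fun _ hz => hz.differentiableAt) hGmax
  have hcenter : ∀ᶠ z in 𝓝 z₀, z = z₀ := by
    filter_upwards [hGconst, hh.deriv.continuousAt.eventually_ne hz₀, hmax]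
      with z hGz hz hσz
    have hGz' := congrArg norm hGz
    rw [hnormG, hnormG, sub_self, norm_zero] at hGz'
    have : ‖deriv h z‖ * ‖z - z₀‖ ^ 2 ≤ 0 := by
      nlinarith [mul_le_mul_of_nonneg_left hσz (by positivity : (0 : ℝ) ≤ 2 * (1 + ‖z₀‖ ^ 2))]
    have := nonpos_of_mul_nonpos_right this (norm_pos_iff.mpr hz)
    simpa [sub_eq_zero] using this
  obtain ⟨z, hz, hne⟩ := ((hcenter.filter_mono nhdsWithin_le_nhds).and
    (self_mem_nhdsWithin (s := {z₀}ᶜ))).exists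
  exact hne hz

section Frontier

variable {Ω : Set ℂ} {g h : ℂ → ℂ}

lemma exists_mem_frontier_isMaxOn_scaleFactor (hΩb : Bornology.IsBounded Ω)
    (hΩne : Ω.Nonempty) (hh : ∀ z ∈ closure Ω, AnalyticAt ℂ h z)
    (hh' : ∀ z ∈ closure Ω, deriv h z ≠ 0) :
    ∃ z ∈ frontier Ω, IsMaxOn (scaleFactor h) (closure Ω) z := by
  obtain ⟨z, hzK, hzmax⟩ := hΩb.isCompact_closure.exists_isMaxOn hΩne.closure
    fun z hz => (hh z hz).continuousAt_scaleFactor.continuousWithinAt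
  refine ⟨z, ?_, hzmax⟩
  by_contra hzfr
  have hzint : z ∈ interior Ω := by
    rw [← closure_sdiff_frontier]
    exact ⟨hzK, hzfr⟩
  exact (hh z hzK).not_isLocalMax_scaleFactor (hh' z hzK)
    (hzmax.isLocalMax (mem_of_superset (isOpen_interior.mem_nhds hzint)
      (interior_subset.trans subset_closure)))

lemma exists_mem_frontier_isMaxOn_scaleFactor_div (hΩb : Bornology.IsBounded Ω)
    (hΩne : Ω.Nonempty) (hg : ∀ z ∈ closure Ω, AnalyticAt ℂ g z)
    (hh : ∀ z ∈ closure Ω, AnalyticAt ℂ h z) (hh' : ∀ z ∈ closure Ω, deriv h z ≠ 0) :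
    ∃ z ∈ frontier Ω, IsMaxOn (fun z => scaleFactor g z / scaleFactor h z) (closure Ω) z := by
  have hdiff : ∀ z ∈ closure Ω, DifferentiableAt ℂ (fun z => deriv g z / deriv h z) z :=
    fun z hz => (hg z hz).deriv.differentiableAt.div (hh z hz).deriv.differentiableAt (hh' z hz)
  simp only [scaleFactor_div_scaleFactor]
  exact Complex.exists_mem_frontier_isMaxOn_norm hΩb hΩne
    ⟨fun z hz => (hdiff z (subset_closure hz)).differentiableWithinAt,
      fun z hz => (hdiff z hz).continuousAt.continuousWithinAt⟩

end Frontier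

lemma sSup_div_sInf_image_le_of_isMaxOn {X : Type*} [TopologicalSpace X] {K : Set X}
    (hK : IsCompact K) (hKne : K.Nonempty) {u v : X → ℝ} (hu : ContinuousOn u K)
    (hv : ContinuousOn v K) (hu0 : ∀ x ∈ K, 0 < u x) (hv0 : ∀ x ∈ K, 0 < v x) {x₁ : X}
    (hx₁ : x₁ ∈ K) (hux₁ : IsMaxOn u K x₁) (hvux₁ : IsMaxOn (fun x => v x / u x) K x₁) :
    sSup (u '' K) / sInf (u '' K) ≤ sSup (v '' K) / sInf (v '' K) := by
  obtain ⟨xm, hxm, hum⟩ := (hK.image_of_continuousOn hu).sInf_mem (hKne.image u)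
  obtain ⟨xv, hxv, hvm⟩ := (hK.image_of_continuousOn hv).sInf_mem (hKne.image v)
  have hsup : sSup (u '' K) = u x₁ :=
    IsGreatest.csSup_eq ⟨mem_image_of_mem u hx₁, forall_mem_image.2 hux₁⟩
  have hratio : v xm / u xm ≤ v x₁ / u x₁ := hvux₁ hxm
  rw [div_le_div_iff₀ (hu0 xm hxm) (hu0 x₁ hx₁)] at hratio
  calc sSup (u '' K) / sInf (u '' K) = u x₁ / u xm := by rw [hsup, hum]
    _ ≤ v x₁ / v xm := by
      rw [div_le_div_iff₀ (hu0 xm hxm) (hv0 xm hxm)]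
      linarith
    _ ≤ sSup (v '' K) / sInf (v '' K) := by
      have hinf : v xv ≤ v xm := hvm ▸ csInf_le (hK.bddBelow_image hv) (mem_image_of_mem v hxm)
      have hsupv : v x₁ ≤ sSup (v '' K) :=
        le_csSup (hK.bddAbove_image hv) (mem_image_of_mem v hx₁)
      rw [← hvm]
      exact div_le_div₀ ((hv0 x₁ hx₁).le.trans hsupv) hsupv (hv0 xv hxv) hinf

theorem chebyshev_min_distortion_general (Ω : Set ℂ) (hΩne : Ω.Nonempty)
    (hΩb : Bornology.IsBounded Ω)
    (V : Set ℂ) (hV : IsOpen V) (hΩV : closure Ω ⊆ V)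
    (h g : ℂ → ℂ)
    (hh : DifferentiableOn ℂ h V) (hg : DifferentiableOn ℂ g V)
    (hh' : ∀ z ∈ closure Ω, deriv h z ≠ 0) (hg' : ∀ z ∈ closure Ω, deriv g z ≠ 0)
    (hconst : ∃ k : ℝ, ∀ z ∈ frontier Ω, scaleFactor h z = k) :
    sSup (scaleFactor h '' closure Ω) / sInf (scaleFactor h '' closure Ω) ≤
      sSup (scaleFactor g '' closure Ω) / sInf (scaleFactor g '' closure Ω) := by
  obtain ⟨k, hk⟩ := hconst
  have hanalytic : ∀ f : ℂ → ℂ, DifferentiableOn ℂ f V → ∀ z ∈ closure Ω, AnalyticAt ℂ f z :=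
    fun f hf z hz => hf.analyticAt (hV.mem_nhds (hΩV hz))
  have hcont :
      ∀ f : ℂ → ℂ, DifferentiableOn ℂ f V → ContinuousOn (scaleFactor f) (closure Ω) :=
    fun f hf z hz => (hanalytic f hf z hz).continuousAt_scaleFactor.continuousWithinAt
  obtain ⟨z₀, hz₀, hz₀max⟩ :=
    exists_mem_frontier_isMaxOn_scaleFactor hΩb hΩne (hanalytic h hh) hh'
  obtain ⟨z₁, hz₁, hz₁ratio⟩ :=
    exists_mem_frontier_isMaxOn_scaleFactor_div hΩb hΩne (hanalytic g hg) (hanalytic h hh) hh'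
  have hz₁h : IsMaxOn (scaleFactor h) (closure Ω) z₁ := fun z hz => by
    simpa only [hk z₁ hz₁, ← hk z₀ hz₀] using hz₀max hz
  exact sSup_div_sInf_image_le_of_isMaxOn hΩb.isCompact_closure hΩne.closure (hcont h hh)
    (hcont g hg) (fun z hz => scaleFactor_pos (hh' z hz))
    (fun z hz => scaleFactor_pos (hg' z hz)) (frontier_subset_closure hz₁) hz₁h hz₁ratio

/-- Chebyshev's theorem, in stereographic coordinates: among conformal maps of a region
of the sphere to the plane, one whose infinitesimal dilatation is constant on the
boundary minimizes the ratio of the largest to the smallest infinitesimal dilatation. -/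
theorem chebyshev_min_distortion (Ω : Set ℂ) (hΩo : IsOpen Ω) (hΩne : Ω.Nonempty)
    (hΩb : Bornology.IsBounded Ω) (hΩc : IsConnected Ω)
    (V : Set ℂ) (hV : IsOpen V) (hΩV : closure Ω ⊆ V)
    (h g : ℂ → ℂ)
    (hh : DifferentiableOn ℂ h V) (hg : DifferentiableOn ℂ g V)
    (hh' : ∀ z ∈ closure Ω, deriv h z ≠ 0) (hg' : ∀ z ∈ closure Ω, deriv g z ≠ 0)
    (hconst : ∃ k : ℝ, ∀ z ∈ frontier Ω, scaleFactor h z = k) :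
    sSup (scaleFactor h '' closure Ω) / sInf (scaleFactor h '' closure Ω) ≤
      sSup (scaleFactor g '' closure Ω) / sInf (scaleFactor g '' closure Ω) :=
  chebyshev_min_distortion_general Ω hΩne hΩb V hV hΩV h g hh hg hh' hg' hconst
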